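/- arXiv:2303.00735 — 2 statements merged into one kernel-verified Lean document; each statement's English description precedes it below -/
import Mathlib

section
/- Lipschitz quasi-convex functions are strictly-locally-quasi-convex (Lemma: SLQC): Let H be a real inner product space, X ⊆ H a convex set, f : H → ℝ a G-Lipschitz quasi-convex function with G > 0, ε > 0, and x, x* ∈ X with f(x) − f(x*) > ε. Then for every unit vector Δ ∈ H (‖Δ‖ = 1) belonging to the normal cone of the sublevel set {z : f(z) ≤ f(x)} at x (i.e., ⟪Δ, z − x⟫ ≤ 0 for all z with f(z) ≤ f(x)), and for every y ∈ H with ‖y − x*‖ ≤ ε/G, it holds that ⟪Δ, y − x⟫ ≤ 0. -/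
open scoped RealInnerProductSpace

theorem apply_le_add_of_norm_sub_le_div {E : Type*} [SeminormedAddCommGroup E]
    {f : E → ℝ} {G r : ℝ} (hG : 0 < G) (hlip : ∀ a b : E, |f a - f b| ≤ G * ‖a - b‖)
    {y c : E} (hy : ‖y - c‖ ≤ r / G) : f y ≤ f c + r :=
  calc f y ≤ f c + G * ‖y - c‖ := by linarith [(abs_le.mp (hlip y c)).2]
    _ ≤ f c + G * (r / G) := by gcongr
    _ = f c + r := by rw [mul_div_cancel₀ r hG.ne']

theorem lipschitz_quasiconvex_slqc_general
    {H : Type*} [NormedAddCommGroup H] [InnerProductSpace ℝ H]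
    (f : H → ℝ) (G : ℝ) (hG : 0 < G)
    (hlip : ∀ a b : H, |f a - f b| ≤ G * ‖a - b‖)
    (ε : ℝ)
    (x xstar : H)
    (hgap : f x - f xstar > ε)
    (Δ : H)
    (hnc : ∀ z : H, f z ≤ f x → ⟪Δ, z - x⟫ ≤ 0) :
    ∀ y : H, ‖y - xstar‖ ≤ ε / G → ⟪Δ, y - x⟫ ≤ 0 := by
  intro y hy
  have hy_sublevel : f y ≤ f x := by
    linarith [apply_le_add_of_norm_sub_le_div hG hlip hy]
  exact hnc y hy_sublevel

/-- Lipschitz quasi-convex functions are strictly-locally-quasi-convex (SLQC): if `f` is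
`G`-Lipschitz and quasi-convex, `x, xstar ∈ X` with `f x - f xstar > ε`, then every unit
vector `Δ` in the normal cone of the sublevel set `{z | f z ≤ f x}` at `x` satisfies
`⟪Δ, y - x⟫ ≤ 0` for every `y` in the closed ball of radius `ε/G` around `xstar`. -/
theorem lipschitz_quasiconvex_slqc
    {H : Type*} [NormedAddCommGroup H] [InnerProductSpace ℝ H]
    (X : Set H) (hXconv : Convex ℝ X)
    (f : H → ℝ) (G : ℝ) (hG : 0 < G)
    (hlip : ∀ a b : H, |f a - f b| ≤ G * ‖a - b‖)
    (hqc : ∀ α : ℝ, Convex ℝ {z : H | f z ≤ α})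
    (ε : ℝ) (hε : 0 < ε)
    (x xstar : H) (hx : x ∈ X) (hxstar : xstar ∈ X)
    (hgap : f x - f xstar > ε)
    (Δ : H) (hΔ : ‖Δ‖ = 1)
    (hnc : ∀ z : H, f z ≤ f x → ⟪Δ, z - x⟫ ≤ 0) :
    ∀ y : H, ‖y - xstar‖ ≤ ε / G → ⟪Δ, y - x⟫ ≤ 0 :=
  lipschitz_quasiconvex_slqc_general f G hG hlip ε x xstar hgap Δ hnc
end

section
/- Each normalized tunnel flow is Lipschitz in the flow vector: for any tunnel p ∈ T that contains at least one edge, the function x ↦ x p / γ(x) is Lipschitz on the nonnegative orthant with respect to the ℓ1 norm, with Lipschitz constant at most 2·C_max/C_min; that is, for all x, y : T → ℝ with x, y ≥ 0 componentwise, |x p / γ(x) − y p / γ(y)| ≤ (2·C_max/C_min) · Σ_{q ∈ T} |x q − y q|. -/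
open Finset

/-- Load on edge `e` induced by the flow vector `x`: `Σ_{p ∈ T, e ∈ p} x p`. -/
noncomputable def edgeLoad {E T : Type*} [Fintype T] [DecidableEq E]
    (tun : T → Finset E) (x : T → ℝ) (e : E) : ℝ :=
  ∑ p, if e ∈ tun p then x p else 0

/-- Normalization constant `γ(x) = max (max_{e ∈ E} load_e(x) / C e) 1`. -/
noncomputable def gamma {E T : Type*} [Fintype E] [Nonempty E] [Fintype T] [DecidableEq E]
    (C : E → ℝ) (tun : T → Finset E) (x : T → ℝ) : ℝ :=
  max (univ.sup' univ_nonempty (fun e => edgeLoad tun x e / C e)) 1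

/-!
Write `δ = Σ_q |x q - y q|`. Each edge load moves by at most `δ`, so `γ` moves by at most
`δ / C_min`, and `γ ≥ 1`. Splitting
`x p / γ x - y p / γ y = (x p - y p) / γ x + (y p / γ y) (γ y - γ x) / γ x`,
the first term is at most `δ`, and the second at most `C_max · δ / C_min`, because a tunnel
through the edge `e` carries at most the load of `e`, which is at most `γ y · C e`.
Finally `δ ≤ C_max · δ / C_min`.
-/

lemma abs_div_sub_div_le {a b g h M : ℝ} (hg : 1 ≤ g) (hh : 0 < h) (hb : 0 ≤ b)
    (hbM : b / h ≤ M) : |a / g - b / h| ≤ |a - b| + M * |g - h| := by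
  have hg₀ : 0 < g := zero_lt_one.trans_le hg
  have hsplit : a / g - b / h = (a - b) / g + b / h * ((h - g) / g) := by
    field_simp
    ring
  have hM : 0 ≤ M := (div_nonneg hb hh.le).trans hbM
  calc |a / g - b / h| = |(a - b) / g + b / h * ((h - g) / g)| := by rw [hsplit]
    _ ≤ |(a - b) / g| + |b / h * ((h - g) / g)| := abs_add_le _ _
    _ = |a - b| / g + b / h * (|g - h| / g) := by
        rw [abs_div (a - b), abs_mul, abs_div (h - g), abs_of_pos hg₀,
          abs_of_nonneg (div_nonneg hb hh.le), abs_sub_comm h g]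
    _ ≤ |a - b| + M * |g - h| :=
        add_le_add (div_le_self (abs_nonneg _) hg)
          (mul_le_mul hbM (div_le_self (abs_nonneg _) hg) (by positivity) hM)

section Network

variable {E T : Type*} [Fintype T] [DecidableEq E]

lemma abs_edgeLoad_sub_le (tun : T → Finset E) (x y : T → ℝ) (e : E) :
    |edgeLoad tun x e - edgeLoad tun y e| ≤ ∑ q, |x q - y q| := by
  rw [edgeLoad, edgeLoad, ← sum_sub_distrib]
  refine (abs_sum_le_sum_abs _ _).trans (sum_le_sum fun q _ => ?_)
  split_ifs <;> simp

lemma le_edgeLoad (tun : T → Finset E) {x : T → ℝ} (hx : ∀ q, 0 ≤ x q) {p : T} {e : E}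
    (he : e ∈ tun p) : x p ≤ edgeLoad tun x e := by
  have := single_le_sum (f := fun q => if e ∈ tun q then x q else 0)
    (fun q _ => by split_ifs; exacts [hx q, le_rfl]) (mem_univ p)
  simpa [edgeLoad, he] using this

variable [Fintype E] [Nonempty E]

lemma one_le_gamma (C : E → ℝ) (tun : T → Finset E) (x : T → ℝ) : 1 ≤ gamma C tun x :=
  le_max_right _ _

lemma edgeLoad_div_le_gamma (C : E → ℝ) (tun : T → Finset E) (x : T → ℝ) (e : E) :
    edgeLoad tun x e / C e ≤ gamma C tun x :=
  (le_sup' (fun e => edgeLoad tun x e / C e) (mem_univ e)).trans (le_max_left _ _)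

lemma gamma_le_gamma_add {C : E → ℝ} (hC : ∀ e, 0 < C e) (tun : T → Finset E)
    (x y : T → ℝ) :
    gamma C tun x ≤ gamma C tun y + (∑ q, |x q - y q|) / univ.inf' univ_nonempty C := by
  have hCmin : 0 < univ.inf' univ_nonempty C := (lt_inf'_iff _).mpr fun e _ => hC e
  have hδ : 0 ≤ ∑ q, |x q - y q| := sum_nonneg fun q _ => abs_nonneg _
  refine max_le (sup'_le _ _ fun e _ => ?_)
    (by linarith [one_le_gamma C tun y, div_nonneg hδ hCmin.le])
  calc edgeLoad tun x e / C e
      ≤ edgeLoad tun y e / C e + (∑ q, |x q - y q|) / C e := by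
        rw [← add_div]
        exact div_le_div_of_nonneg_right
          (by linarith [(abs_le.mp (abs_edgeLoad_sub_le tun x y e)).2]) (hC e).le
    _ ≤ gamma C tun y + (∑ q, |x q - y q|) / univ.inf' univ_nonempty C :=
        add_le_add (edgeLoad_div_le_gamma C tun y e)
          (div_le_div_of_nonneg_left hδ hCmin (inf'_le _ (mem_univ e)))

lemma abs_gamma_sub_le {C : E → ℝ} (hC : ∀ e, 0 < C e) (tun : T → Finset E)
    (x y : T → ℝ) :
    |gamma C tun x - gamma C tun y| ≤ (∑ q, |x q - y q|) / univ.inf' univ_nonempty C := by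
  have hyx := gamma_le_gamma_add hC tun y x
  simp only [abs_sub_comm (y _)] at hyx
  exact abs_sub_le_iff.mpr ⟨by linarith [gamma_le_gamma_add hC tun x y], by linarith⟩

lemma div_gamma_le_sup' {C : E → ℝ} (hC : ∀ e, 0 < C e) (tun : T → Finset E) {x : T → ℝ}
    (hx : ∀ q, 0 ≤ x q) {p : T} {e : E} (he : e ∈ tun p) :
    x p / gamma C tun x ≤ univ.sup' univ_nonempty C := by
  have hγ : 0 < gamma C tun x := zero_lt_one.trans_le (one_le_gamma C tun x)
  rw [div_le_iff₀ hγ]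
  calc x p ≤ edgeLoad tun x e := le_edgeLoad tun hx he
    _ ≤ gamma C tun x * C e := (div_le_iff₀ (hC e)).mp (edgeLoad_div_le_gamma C tun x e)
    _ ≤ univ.sup' univ_nonempty C * gamma C tun x := by
        rw [mul_comm]
        gcongr
        exact le_sup' _ (mem_univ e)

end Network

theorem normalized_flow_lipschitz_general {E T : Type*} [Fintype E] [Nonempty E] [Fintype T]
    [DecidableEq E]
    (C : E → ℝ) (hC : ∀ e, 0 < C e) (tun : T → Finset E)
    (p : T) (hp : (tun p).Nonempty)
    (x y : T → ℝ) (hy : ∀ q, 0 ≤ y q) :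
    |x p / gamma C tun x - y p / gamma C tun y| ≤
      (2 * univ.sup' univ_nonempty C / univ.inf' univ_nonempty C) * ∑ q, |x q - y q| := by
  obtain ⟨e, he⟩ := hp
  set Cmax := univ.sup' univ_nonempty C
  set Cmin := univ.inf' univ_nonempty C
  set δ := ∑ q, |x q - y q|
  have hCmin : 0 < Cmin := (lt_inf'_iff _).mpr fun e _ => hC e
  have hCmin_le : Cmin ≤ Cmax := (inf'_le _ (mem_univ e)).trans (le_sup' _ (mem_univ e))
  have hδ : 0 ≤ δ := sum_nonneg fun q _ => abs_nonneg _
  calc |x p / gamma C tun x - y p / gamma C tun y|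
      ≤ |x p - y p| + Cmax * |gamma C tun x - gamma C tun y| :=
        abs_div_sub_div_le (one_le_gamma C tun x)
          (zero_lt_one.trans_le (one_le_gamma C tun y)) (hy p) (div_gamma_le_sup' hC tun hy he)
    _ ≤ δ + Cmax * (δ / Cmin) :=
        add_le_add
          (single_le_sum (f := fun q => |x q - y q|) (fun q _ => abs_nonneg _) (mem_univ p))
          (mul_le_mul_of_nonneg_left (abs_gamma_sub_le hC tun x y) (hCmin.le.trans hCmin_le))
    _ ≤ 2 * Cmax / Cmin * δ := by
        rw [div_mul_eq_mul_div, le_div_iff₀ hCmin, add_mul, mul_assoc,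
          div_mul_cancel₀ _ hCmin.ne']
        nlinarith

/-- Each normalized tunnel flow `x ↦ x p / γ(x)` is Lipschitz on the nonnegative orthant
w.r.t. the ℓ1 norm, with Lipschitz constant at most `2 C_max / C_min`. -/
theorem normalized_flow_lipschitz {E T : Type*} [Fintype E] [Nonempty E] [Fintype T]
    [DecidableEq E]
    (C : E → ℝ) (hC : ∀ e, 0 < C e) (tun : T → Finset E)
    (p : T) (hp : (tun p).Nonempty)
    (x y : T → ℝ) (hx : ∀ q, 0 ≤ x q) (hy : ∀ q, 0 ≤ y q) :
    |x p / gamma C tun x - y p / gamma C tun y| ≤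
      (2 * univ.sup' univ_nonempty C / univ.inf' univ_nonempty C) * ∑ q, |x q - y q| :=
  normalized_flow_lipschitz_general C hC tun p hp x y hy
end
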